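/- Let K be a field of characteristic p > 0, W a finite-dimensional K-vector space, R = K[α₁,α₂]/(α₁^p,α₂^p) with grading Rℓ, and D the corresponding divided-derivative algebra acting on W ⊗ R (trivially on W). Suppose F_ℓ ⊆ W ⊗ Rℓ (0 ≤ ℓ ≤ 2(p-1)) are subspaces with D₁·F_ℓ ⊆ F_{ℓ-1} for all ℓ ≥ 1, and suppose F_{2(p-1)} = W' ⊗ R^{2(p-1)} for a subspace W' ⊆ W with dim F₀ = dim W'. Then F_ℓ = W' ⊗ Rℓ for all 0 ≤ ℓ ≤ 2(p-1). -/

import Mathlib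

/-! Concrete model of W ⊗ R for R = K[α₁,α₂]/(α₁^p,α₂^p): elements of W ⊗ R are functions
(Fin p × Fin p) → W (the value at (i,j) is the W-coefficient of α₁^i α₂^j).  `truncDeriv₁`
and `truncDeriv₂` are the actions of ∂₁, ∂₂ (acting trivially on W), and `wedgeSub K W p ℓ W'`
is the subspace W' ⊗ Rℓ of elements supported in total degree ℓ with coefficients in W'. -/

/-- The operator id_W ⊗ ∂₁ on W ⊗ R. -/
noncomputable def truncDeriv₁ (K W : Type) [Field K] [AddCommGroup W] [Module K W]
    (p : ℕ) : ((Fin p × Fin p) → W) →ₗ[K] ((Fin p × Fin p) → W) where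
  toFun f q := if h : (q.1 : ℕ) + 1 < p then
      (((q.1 : ℕ) + 1 : ℕ) : K) • f (⟨(q.1 : ℕ) + 1, h⟩, q.2) else 0
  map_add' f g := by
    funext q
    by_cases h : (q.1 : ℕ) + 1 < p <;> simp [h, smul_add]
  map_smul' c f := by
    funext q
    by_cases h : (q.1 : ℕ) + 1 < p
    · simp only [Pi.smul_apply, RingHom.id_apply, dif_pos h]
      rw [smul_comm]
    · simp only [Pi.smul_apply, RingHom.id_apply, dif_neg h, smul_zero]

/-- The operator id_W ⊗ ∂₂ on W ⊗ R. -/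
noncomputable def truncDeriv₂ (K W : Type) [Field K] [AddCommGroup W] [Module K W]
    (p : ℕ) : ((Fin p × Fin p) → W) →ₗ[K] ((Fin p × Fin p) → W) where
  toFun f q := if h : (q.2 : ℕ) + 1 < p then
      (((q.2 : ℕ) + 1 : ℕ) : K) • f (q.1, ⟨(q.2 : ℕ) + 1, h⟩) else 0
  map_add' f g := by
    funext q
    by_cases h : (q.2 : ℕ) + 1 < p <;> simp [h, smul_add]
  map_smul' c f := by
    funext q
    by_cases h : (q.2 : ℕ) + 1 < p
    · simp only [Pi.smul_apply, RingHom.id_apply, dif_pos h]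
      rw [smul_comm]
    · simp only [Pi.smul_apply, RingHom.id_apply, dif_neg h, smul_zero]

/-- The subspace W' ⊗ Rℓ of W ⊗ R. -/
def wedgeSub (K W : Type) [Field K] [AddCommGroup W] [Module K W] (p ℓ : ℕ)
    (W' : Submodule K W) : Submodule K ((Fin p × Fin p) → W) :=
  Submodule.pi Set.univ
    (fun q : Fin p × Fin p =>
      if (q.1 : ℕ) + (q.2 : ℕ) = ℓ then W' else (⊥ : Submodule K W))

/-! Applying `∂₁^a ∂₂^b` to an element of `W ⊗ R` moves its coefficient at `(i + a, j + b)` to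
`(i, j)`, multiplied by `(i + 1) ⋯ (i + a) (j + 1) ⋯ (j + b)`, which is nonzero in `K` since every
factor is less than `p`. Going down from the top degree this gives `W' ⊗ Rℓ ⊆ F ℓ` for all `ℓ`, so
`F 0 = W' ⊗ R⁰` by the dimension hypothesis; going down from degree `ℓ` to degree `0` then shows
that every coefficient of an element of `F ℓ` lies in `W'`. -/

theorem natCast_ne_zero_of_pos_of_lt {K : Type} [AddMonoidWithOne K] (p : ℕ) [CharP K p]
    {k : ℕ} (hk₀ : 0 < k) (hkp : k < p) : (k : K) ≠ 0 := fun h =>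
  absurd (Nat.le_of_dvd hk₀ ((CharP.cast_eq_zero_iff K p k).mp h)) (by omega)

section truncDeriv

variable {K W : Type} [Field K] [AddCommGroup W] [Module K W] {p : ℕ}

theorem truncDeriv₁_apply_of_lt (f : (Fin p × Fin p) → W) (i j : Fin p) (h : (i : ℕ) + 1 < p) :
    truncDeriv₁ K W p f (i, j) = (((i : ℕ) + 1 : ℕ) : K) • f (⟨i + 1, h⟩, j) :=
  dif_pos h

theorem truncDeriv₂_apply_of_lt (f : (Fin p × Fin p) → W) (i j : Fin p) (h : (j : ℕ) + 1 < p) :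
    truncDeriv₂ K W p f (i, j) = (((j : ℕ) + 1 : ℕ) : K) • f (i, ⟨j + 1, h⟩) :=
  dif_pos h

theorem truncDeriv₁_single (i j : Fin p) (h : (i : ℕ) + 1 < p) (w : W) :
    truncDeriv₁ K W p (Pi.single (⟨i + 1, h⟩, j) w) =
      (((i : ℕ) + 1 : ℕ) : K) • Pi.single (i, j) w := by
  funext ⟨a, b⟩
  simp only [truncDeriv₁, LinearMap.coe_mk, AddHom.coe_mk, Pi.smul_apply, Pi.single_apply,
    Prod.mk.injEq, Fin.ext_iff]
  split_ifs <;> simp_all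

theorem truncDeriv₂_single (i j : Fin p) (h : (j : ℕ) + 1 < p) (w : W) :
    truncDeriv₂ K W p (Pi.single (i, ⟨j + 1, h⟩) w) =
      (((j : ℕ) + 1 : ℕ) : K) • Pi.single (i, j) w := by
  funext ⟨a, b⟩
  simp only [truncDeriv₂, LinearMap.coe_mk, AddHom.coe_mk, Pi.smul_apply, Pi.single_apply,
    Prod.mk.injEq, Fin.ext_iff]
  split_ifs <;> simp_all

end truncDeriv

section wedgeSub

variable {K W : Type} [Field K] [AddCommGroup W] [Module K W] {p : ℕ} {W' : Submodule K W}

theorem single_mem_wedgeSub (i j : Fin p) {w : W} (hw : w ∈ W') :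
    Pi.single (i, j) w ∈ wedgeSub K W p (i + j) W' := by
  refine Submodule.mem_pi.mpr fun q _ => ?_
  rcases eq_or_ne q (i, j) with rfl | hq
  · simpa using hw
  · simp [Pi.single_eq_of_ne hq]

theorem apply_mem_of_mem_wedgeSub {ℓ : ℕ} {f : (Fin p × Fin p) → W}
    (hf : f ∈ wedgeSub K W p ℓ W') (q : Fin p × Fin p) (hq : (q.1 : ℕ) + q.2 = ℓ) : f q ∈ W' := by
  simpa [hq] using Submodule.mem_pi.mp hf q trivial

theorem apply_eq_zero_of_mem_wedgeSub {ℓ : ℕ} {f : (Fin p × Fin p) → W}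
    (hf : f ∈ wedgeSub K W p ℓ W') (q : Fin p × Fin p) (hq : (q.1 : ℕ) + q.2 ≠ ℓ) : f q = 0 := by
  simpa [hq] using Submodule.mem_pi.mp hf q trivial

theorem wedgeSub_le_of_single_mem {ℓ : ℕ} {F : Submodule K ((Fin p × Fin p) → W)}
    (h : ∀ i j : Fin p, (i : ℕ) + j = ℓ → ∀ w ∈ W', Pi.single (i, j) w ∈ F) :
    wedgeSub K W p ℓ W' ≤ F := by
  intro f hf
  rw [← Finset.univ_sum_single f]
  refine Submodule.sum_mem _ fun q _ => ?_
  by_cases hq : (q.1 : ℕ) + q.2 = ℓ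
  · exact h q.1 q.2 hq _ (apply_mem_of_mem_wedgeSub hf q hq)
  · simp [apply_eq_zero_of_mem_wedgeSub hf q hq]

theorem finrank_le_finrank_wedgeSub_zero [NeZero p] [FiniteDimensional K W] :
    Module.finrank K W' ≤ Module.finrank K (wedgeSub K W p 0 W') := by
  let ι := LinearMap.single K (fun _ : Fin p × Fin p => W) (0, 0)
  have hι : Function.Injective ι := Pi.single_injective (M := fun _ => W) (0, 0)
  calc Module.finrank K W' = Module.finrank K (W'.map ι) :=
        (Submodule.equivMapOfInjective ι hι W').finrank_eq
    _ ≤ Module.finrank K (wedgeSub K W p 0 W') := Submodule.finrank_mono <| by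
        rintro _ ⟨w, hw, rfl⟩
        exact single_mem_wedgeSub (0 : Fin p) 0 hw

theorem le_wedgeSub_of_apply_mem {ℓ : ℕ} {F : Submodule K ((Fin p × Fin p) → W)}
    (hF : F ≤ wedgeSub K W p ℓ ⊤)
    (h : ∀ f ∈ F, ∀ q : Fin p × Fin p, (q.1 : ℕ) + q.2 = ℓ → f q ∈ W') :
    F ≤ wedgeSub K W p ℓ W' := by
  refine fun f hf => Submodule.mem_pi.mpr fun q _ => ?_
  by_cases hq : (q.1 : ℕ) + q.2 = ℓ
  · simpa [hq] using h f hf q hq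
  · simp [hq, apply_eq_zero_of_mem_wedgeSub (hF hf) q hq]

end wedgeSub

def IsTruncDerivClosed {K W : Type} [Field K] [AddCommGroup W] [Module K W] {p : ℕ}
    (F : ℕ → Submodule K ((Fin p × Fin p) → W)) : Prop :=
  ∀ ℓ : ℕ, 1 ≤ ℓ →
    (F ℓ).map (truncDeriv₁ K W p) ≤ F (ℓ - 1) ∧ (F ℓ).map (truncDeriv₂ K W p) ≤ F (ℓ - 1)

namespace IsTruncDerivClosed

variable {K W : Type} [Field K] [AddCommGroup W] [Module K W] {p : ℕ} {W' : Submodule K W}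
  {F : ℕ → Submodule K ((Fin p × Fin p) → W)}

theorem truncDeriv₁_mem (hD : IsTruncDerivClosed F) {ℓ : ℕ} {f : (Fin p × Fin p) → W}
    (hf : f ∈ F (ℓ + 1)) : truncDeriv₁ K W p f ∈ F ℓ :=
  (hD (ℓ + 1) ℓ.succ_pos).1 (Submodule.mem_map_of_mem hf)

theorem truncDeriv₂_mem (hD : IsTruncDerivClosed F) {ℓ : ℕ} {f : (Fin p × Fin p) → W}
    (hf : f ∈ F (ℓ + 1)) : truncDeriv₂ K W p f ∈ F ℓ :=
  (hD (ℓ + 1) ℓ.succ_pos).2 (Submodule.mem_map_of_mem hf)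

theorem single_mem [CharP K p] (hD : IsTruncDerivClosed F)
    (htop : F (2 * (p - 1)) = wedgeSub K W p (2 * (p - 1)) W') (i j : Fin p) {w : W}
    (hw : w ∈ W') : Pi.single (i, j) w ∈ F (i + j) := by
  obtain ⟨n, hn⟩ : ∃ n, (p - 1 - i) + (p - 1 - j) = n := ⟨_, rfl⟩
  induction n generalizing i j with
  | zero =>
    have hij : (i : ℕ) + j = 2 * (p - 1) := by omega
    rw [hij, htop, ← hij]
    exact single_mem_wedgeSub i j hw
  | succ n ih =>
    by_cases hi : (i : ℕ) + 1 < p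
    · have h := hD.truncDeriv₁_mem (ℓ := i + j) <| by
        simpa [Nat.add_right_comm] using ih ⟨i + 1, hi⟩ j (by simp; omega)
      rw [truncDeriv₁_single] at h
      exact (Submodule.smul_mem_iff _ (natCast_ne_zero_of_pos_of_lt p (Nat.succ_pos _) hi)).mp h
    · have hj : (j : ℕ) + 1 < p := by omega
      have h := hD.truncDeriv₂_mem (ℓ := i + j) <| by
        simpa [Nat.add_assoc] using ih i ⟨j + 1, hj⟩ (by simp; omega)
      rw [truncDeriv₂_single] at h
      exact (Submodule.smul_mem_iff _ (natCast_ne_zero_of_pos_of_lt p (Nat.succ_pos _) hj)).mp h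

theorem wedgeSub_le [CharP K p] (hD : IsTruncDerivClosed F)
    (htop : F (2 * (p - 1)) = wedgeSub K W p (2 * (p - 1)) W') (ℓ : ℕ) :
    wedgeSub K W p ℓ W' ≤ F ℓ :=
  wedgeSub_le_of_single_mem fun i j hij _ hw => hij ▸ hD.single_mem htop i j hw

theorem apply_mem [CharP K p] (hD : IsTruncDerivClosed F)
    (h0 : F 0 ≤ wedgeSub K W p 0 W') {ℓ : ℕ} {f : (Fin p × Fin p) → W} (hf : f ∈ F ℓ)
    (q : Fin p × Fin p) (hq : (q.1 : ℕ) + q.2 = ℓ) : f q ∈ W' := by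
  induction ℓ generalizing f q with
  | zero => exact apply_mem_of_mem_wedgeSub (h0 hf) q hq
  | succ ℓ ih =>
    obtain ⟨⟨a, ha⟩, ⟨b, hb⟩⟩ := q
    rcases a with _ | a
    · rcases b with _ | b
      · simp at hq
      have h := ih (hD.truncDeriv₂_mem hf) (⟨0, ha⟩, ⟨b, by omega⟩) (by simp at hq ⊢; omega)
      rw [truncDeriv₂_apply_of_lt _ _ _ hb] at h
      exact (W'.smul_mem_iff (natCast_ne_zero_of_pos_of_lt p (Nat.succ_pos _) hb)).mp h
    · have h := ih (hD.truncDeriv₁_mem hf) (⟨a, by omega⟩, ⟨b, hb⟩) (by simp at hq ⊢; omega)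
      rw [truncDeriv₁_apply_of_lt _ _ _ ha] at h
      exact (W'.smul_mem_iff (natCast_ne_zero_of_pos_of_lt p (Nat.succ_pos _) ha)).mp h

end IsTruncDerivClosed

/-- Local-algebra core of Lemma 4: if F_ℓ ⊆ W ⊗ Rℓ satisfy D₁·F_ℓ ⊆ F_{ℓ-1},
F_{2(p-1)} = W' ⊗ R^{2(p-1)} and dim F₀ = dim W', then F_ℓ = W' ⊗ Rℓ for all ℓ. -/
theorem stmt11 (K : Type) [Field K] (p : ℕ) [Fact p.Prime] [CharP K p]
    (W : Type) [AddCommGroup W] [Module K W] [FiniteDimensional K W]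
    (W' : Submodule K W) (F : ℕ → Submodule K ((Fin p × Fin p) → W))
    (hF : ∀ ℓ : ℕ, ℓ ≤ 2 * (p - 1) → F ℓ ≤ wedgeSub K W p ℓ ⊤)
    (hD : ∀ ℓ : ℕ, 1 ≤ ℓ →
      (F ℓ).map (truncDeriv₁ K W p) ≤ F (ℓ - 1) ∧
      (F ℓ).map (truncDeriv₂ K W p) ≤ F (ℓ - 1))
    (htop : F (2 * (p - 1)) = wedgeSub K W p (2 * (p - 1)) W')
    (hdim : Module.finrank K (F 0) = Module.finrank K W') :
    ∀ ℓ : ℕ, ℓ ≤ 2 * (p - 1) → F ℓ = wedgeSub K W p ℓ W' := by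
  have hD : IsTruncDerivClosed F := hD
  have : NeZero p := ⟨(Fact.out : p.Prime).ne_zero⟩
  have hF₀ : F 0 = wedgeSub K W p 0 W' :=
    (Submodule.eq_of_le_of_finrank_le (hD.wedgeSub_le htop 0)
      (hdim ▸ finrank_le_finrank_wedgeSub_zero)).symm
  intro ℓ hℓ
  refine le_antisymm ?_ (hD.wedgeSub_le htop ℓ)
  exact le_wedgeSub_of_apply_mem (hF ℓ hℓ) fun f hf q hq => hD.apply_mem hF₀.le hf q hq
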